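/- Let X : [a,c] → ℝ^d have C¹ components and let b ∈ (a,c). Then the third-order iterated integral satisfies Chen's identity: S^{i_1,i_2,i_3}_{a,c}(X) = S^{i_1,i_2,i_3}_{a,b}(X) + S^{i_1,i_2}_{a,b}(X) S^{i_3}_{b,c}(X) + S^{i_1}_{a,b}(X) S^{i_2,i_3}_{b,c}(X) + S^{i_1,i_2,i_3}_{b,c}(X). -/

import Mathlib

open MeasureTheory intervalIntegral

/-!
Chen's identity is proved level by level. Split the outermost integral at `b`: on `[b, t]` the
integrand still carries the iterated integral started at `a`, which the identity one level down
rewrites as a constant, plus `∫_a^b f` times a lower iterated integral started at `b`, plus the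
iterated integral started at `b`. Integrating these three pieces gives the terms of the next level.
-/

noncomputable def iteratedIntegral₂ (f g : ℝ → ℝ) (a t : ℝ) : ℝ :=
  ∫ s in a..t, (∫ r in a..s, f r) * g s

noncomputable def iteratedIntegral₃ (f g h : ℝ → ℝ) (a t : ℝ) : ℝ :=
  ∫ s in a..t, iteratedIntegral₂ f g a s * h s

section Chen

variable {f g h : ℝ → ℝ}

theorem intervalIntegrable_primitive_mul (hf : ∀ u v, IntervalIntegrable f volume u v)
    {u v : ℝ} (hg : IntervalIntegrable g volume u v) (a : ℝ) :
    IntervalIntegrable (fun s => (∫ r in a..s, f r) * g s) volume u v :=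
  hg.continuousOn_mul (continuous_primitive hf a).continuousOn

theorem continuous_iteratedIntegral₂ (hf : ∀ u v, IntervalIntegrable f volume u v)
    (hg : ∀ u v, IntervalIntegrable g volume u v) (a : ℝ) :
    Continuous (iteratedIntegral₂ f g a) :=
  continuous_primitive (fun u v => intervalIntegrable_primitive_mul hf (hg u v) a) a

theorem iteratedIntegral₂_add_adjacent (hf : ∀ u v, IntervalIntegrable f volume u v)
    (hg : ∀ u v, IntervalIntegrable g volume u v) (a b t : ℝ) :
    iteratedIntegral₂ f g a t =
      iteratedIntegral₂ f g a b + (∫ r in a..b, f r) * (∫ s in b..t, g s) +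
        iteratedIntegral₂ f g b t := by
  have hprod : ∀ c u v, IntervalIntegrable (fun s => (∫ r in c..s, f r) * g s) volume u v :=
    fun c u v => intervalIntegrable_primitive_mul hf (hg u v) c
  have hsplit : ∀ s, (∫ r in a..s, f r) * g s =
      (∫ r in a..b, f r) * g s + (∫ r in b..s, f r) * g s := fun s => by
    rw [← add_mul, integral_add_adjacent_intervals (hf a b) (hf b s)]
  have htail : ∫ s in b..t, (∫ r in a..s, f r) * g s =
      (∫ r in a..b, f r) * (∫ s in b..t, g s) + iteratedIntegral₂ f g b t := by
    rw [integral_congr fun s _ => hsplit s, integral_add ((hg b t).const_mul _) (hprod b b t),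
      intervalIntegral.integral_const_mul]
    rfl
  rw [iteratedIntegral₂, ← integral_add_adjacent_intervals (hprod a a b) (hprod a b t), htail,
    ← add_assoc]
  rfl

theorem iteratedIntegral₃_add_adjacent (hf : ∀ u v, IntervalIntegrable f volume u v)
    (hg : ∀ u v, IntervalIntegrable g volume u v) (hh : ∀ u v, IntervalIntegrable h volume u v)
    (a b c : ℝ) :
    iteratedIntegral₃ f g h a c =
      iteratedIntegral₃ f g h a b + iteratedIntegral₂ f g a b * (∫ s in b..c, h s) +
        (∫ r in a..b, f r) * iteratedIntegral₂ g h b c + iteratedIntegral₃ f g h b c := by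
  have hprod : ∀ c' u v,
      IntervalIntegrable (fun s => iteratedIntegral₂ f g c' s * h s) volume u v :=
    fun c' u v => (hh u v).continuousOn_mul (continuous_iteratedIntegral₂ hf hg c').continuousOn
  have hcross := intervalIntegrable_primitive_mul hg (hh b c) b
  have hsplit : ∀ s, iteratedIntegral₂ f g a s * h s =
      iteratedIntegral₂ f g a b * h s + (∫ r in a..b, f r) * ((∫ r in b..s, g r) * h s) +
        iteratedIntegral₂ f g b s * h s := fun s => by
    rw [iteratedIntegral₂_add_adjacent hf hg a b s]
    ring
  have htail : ∫ s in b..c, iteratedIntegral₂ f g a s * h s =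
      iteratedIntegral₂ f g a b * (∫ s in b..c, h s) +
        (∫ r in a..b, f r) * iteratedIntegral₂ g h b c + iteratedIntegral₃ f g h b c := by
    rw [integral_congr fun s _ => hsplit s,
      integral_add (((hh b c).const_mul _).add (hcross.const_mul _)) (hprod b b c),
      integral_add ((hh b c).const_mul _) (hcross.const_mul _), intervalIntegral.integral_const_mul,
      intervalIntegral.integral_const_mul]
    rfl
  rw [iteratedIntegral₃, ← integral_add_adjacent_intervals (hprod a a b) (hprod a b c), htail]
  simp only [iteratedIntegral₃, add_assoc]

end Chen

theorem chen_identity_level_three_general (d : ℕ) (a b c : ℝ)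
    (X : ℝ → Fin d → ℝ) (hX : ∀ i, ContDiff ℝ 1 (fun t => X t i)) (i1 i2 i3 : Fin d) :
    (∫ t3 in a..c,
      (∫ t2 in a..t3, (∫ t1 in a..t2, deriv (fun t => X t i1) t1) *
          deriv (fun t => X t i2) t2) * deriv (fun t => X t i3) t3) =
      (∫ t3 in a..b,
        (∫ t2 in a..t3, (∫ t1 in a..t2, deriv (fun t => X t i1) t1) *
            deriv (fun t => X t i2) t2) * deriv (fun t => X t i3) t3) +
      (∫ t2 in a..b, (∫ t1 in a..t2, deriv (fun t => X t i1) t1) *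
          deriv (fun t => X t i2) t2) * (X c i3 - X b i3) +
      (X b i1 - X a i1) *
        (∫ t2 in b..c, (∫ t1 in b..t2, deriv (fun t => X t i2) t1) *
            deriv (fun t => X t i3) t2) +
      ∫ t3 in b..c,
        (∫ t2 in b..t3, (∫ t1 in b..t2, deriv (fun t => X t i1) t1) *
            deriv (fun t => X t i2) t2) * deriv (fun t => X t i3) t3 := by
  have hint : ∀ i u v, IntervalIntegrable (deriv fun t => X t i) volume u v := fun i u v =>
    ((hX i).continuous_deriv le_rfl).intervalIntegrable u v
  have hftc : ∀ i u v, ∫ s in u..v, deriv (fun t => X t i) s = X v i - X u i := fun i u v =>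
    integral_deriv_eq_sub (fun _ _ => ((hX i).differentiable one_ne_zero).differentiableAt)
      (hint i u v)
  have chen := iteratedIntegral₃_add_adjacent (hint i1) (hint i2) (hint i3) a b c
  rw [hftc, hftc] at chen
  exact chen

/-- Chen's identity at level 3:
S^{i1,i2,i3}_{a,c} = S^{i1,i2,i3}_{a,b} + S^{i1,i2}_{a,b} S^{i3}_{b,c}
  + S^{i1}_{a,b} S^{i2,i3}_{b,c} + S^{i1,i2,i3}_{b,c},
with iterated integrals of a C¹ path defined recursively. -/
theorem chen_identity_level_three (d : ℕ) (a b c : ℝ) (hab : a < b) (hbc : b < c)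
    (X : ℝ → Fin d → ℝ) (hX : ∀ i, ContDiff ℝ 1 (fun t => X t i)) (i1 i2 i3 : Fin d) :
    (∫ t3 in a..c,
      (∫ t2 in a..t3, (∫ t1 in a..t2, deriv (fun t => X t i1) t1) *
          deriv (fun t => X t i2) t2) * deriv (fun t => X t i3) t3) =
      (∫ t3 in a..b,
        (∫ t2 in a..t3, (∫ t1 in a..t2, deriv (fun t => X t i1) t1) *
            deriv (fun t => X t i2) t2) * deriv (fun t => X t i3) t3) +
      (∫ t2 in a..b, (∫ t1 in a..t2, deriv (fun t => X t i1) t1) *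
          deriv (fun t => X t i2) t2) * (X c i3 - X b i3) +
      (X b i1 - X a i1) *
        (∫ t2 in b..c, (∫ t1 in b..t2, deriv (fun t => X t i2) t1) *
            deriv (fun t => X t i3) t2) +
      ∫ t3 in b..c,
        (∫ t2 in b..t3, (∫ t1 in b..t2, deriv (fun t => X t i1) t1) *
            deriv (fun t => X t i2) t2) * deriv (fun t => X t i3) t3 :=
  chen_identity_level_three_general d a b c X hX i1 i2 i3
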